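/- Let k, J, m, r, ϱ, ζ > 0 and Â₂ = [[-(k+ϱ)/J - F_w, k/(J·r) - F_v], [k/(m·r), -(k + ζ·r²)/(m·r²)]]. Then Â₂ is Hurwitz if and only if F_w > -(k+ϱ)/J - k/(m·r²) - ζ/m and F_v > -ϱ/(r·J) - ((ζ·r² + k)/(r·k))·F_w - (k+ϱ)·ζ·r/(k·J). -/
import Mathlib


open Matrix Polynomial

/-- A 2×2 real matrix is Hurwitz if every (complex) eigenvalue,
i.e. every root of its characteristic polynomial over ℂ, has negative real part. -/
def IsHurwitz (A : Matrix (Fin 2) (Fin 2) ℝ) : Prop :=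
  ∀ z : ℂ, (A.map (fun x => (x : ℂ))).charpoly.IsRoot z → z.re < 0

private lemma quad_roots_neg_iff (t d : ℝ) :
    (∀ z : ℂ, z ^ 2 - (t : ℂ) * z + (d : ℂ) = 0 → z.re < 0) ↔ t < 0 ∧ 0 < d := by
  constructor
  · intro h
    have hd : 0 < d := by
      by_contra hd
      push_neg at hd
      set s := Real.sqrt (t ^ 2 - 4 * d) with hs
      have hs2 : s ^ 2 = t ^ 2 - 4 * d := Real.sq_sqrt (by nlinarith)
      have hst : s ≥ |t| := by
        rw [hs]
        have := Real.sqrt_le_sqrt (show t ^ 2 ≤ t ^ 2 - 4 * d by linarith)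
        calc |t| = Real.sqrt (t ^ 2) := by rw [Real.sqrt_sq_eq_abs]
        _ ≤ _ := this
      set x := (t + s) / 2 with hx
      have hx0 : 0 ≤ x := by
        have := neg_abs_le t
        rw [hx]; nlinarith
      have hroot : (x : ℂ) ^ 2 - (t : ℂ) * x + (d : ℂ) = 0 := by
        have : x ^ 2 - t * x + d = 0 := by rw [hx]; nlinarith
        exact_mod_cast this
      have := h x hroot
      simp at this
      linarith
    refine ⟨?_, hd⟩
    by_contra ht
    push_neg at ht
    by_cases hΔ : t ^ 2 - 4 * d ≥ 0
    · set s := Real.sqrt (t ^ 2 - 4 * d) with hs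
      have hs2 : s ^ 2 = t ^ 2 - 4 * d := Real.sq_sqrt hΔ
      have hs0 : 0 ≤ s := Real.sqrt_nonneg _
      set x := (t + s) / 2 with hx
      have hx0 : 0 ≤ x := by rw [hx]; linarith
      have hroot : (x : ℂ) ^ 2 - (t : ℂ) * x + (d : ℂ) = 0 := by
        have : x ^ 2 - t * x + d = 0 := by rw [hx]; nlinarith
        exact_mod_cast this
      have := h x hroot
      simp at this
      linarith
    · push_neg at hΔ
      set s := Real.sqrt (4 * d - t ^ 2) with hs
      have hs2 : s ^ 2 = 4 * d - t ^ 2 := Real.sq_sqrt (by linarith)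
      set z : ℂ := ⟨t / 2, s / 2⟩ with hz
      have hroot : z ^ 2 - (t : ℂ) * z + (d : ℂ) = 0 := by
        rw [Complex.ext_iff]
        constructor
        · simp [hz, pow_two, Complex.mul_re, Complex.mul_im]
          nlinarith
        · simp [hz, pow_two, Complex.mul_re, Complex.mul_im]
          ring
      have := h z hroot
      simp [hz] at this
      linarith
  · rintro ⟨ht, hd⟩ z hroot
    rw [Complex.ext_iff] at hroot
    set x := z.re with hxd
    set y := z.im with hyd
    have h1 : x ^ 2 - y ^ 2 - t * x + d = 0 := by
      have := hroot.1
      simp [pow_two, Complex.mul_re, Complex.mul_im] at this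
      nlinarith [this]
    have h2 : y * (2 * x - t) = 0 := by
      have := hroot.2
      simp [pow_two, Complex.mul_re, Complex.mul_im] at this
      nlinarith [this]
    rcases mul_eq_zero.mp h2 with hy | hxt
    · nlinarith
    · nlinarith

theorem brake_mode_hurwitz_iff
    (k J m r ϱ ζ Fw Fv : ℝ)
    (hk : k > 0) (hJ : J > 0) (hm : m > 0) (hr : r > 0) (hϱ : ϱ > 0) (hζ : ζ > 0) :
    IsHurwitz !![-((k + ϱ) / J) - Fw, k / (J * r) - Fv;
                 k / (m * r), -((k + ζ * r ^ 2) / (m * r ^ 2))] ↔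
      (Fw > -((k + ϱ) / J) - k / (m * r ^ 2) - ζ / m
       ∧ Fv > -(ϱ / (r * J)) - (ζ * r ^ 2 + k) / (r * k) * Fw
                - (k + ϱ) * ζ * r / (k * J)) := by
  set A : Matrix (Fin 2) (Fin 2) ℝ :=
    !![-((k + ϱ) / J) - Fw, k / (J * r) - Fv;
       k / (m * r), -((k + ζ * r ^ 2) / (m * r ^ 2))] with hA
  set T : ℝ := (-((k + ϱ) / J) - Fw) + (-((k + ζ * r ^ 2) / (m * r ^ 2))) with hT
  set D : ℝ := (-((k + ϱ) / J) - Fw) * (-((k + ζ * r ^ 2) / (m * r ^ 2)))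
      - (k / (J * r) - Fv) * (k / (m * r)) with hD
  have hmap : A.map (fun x => (x : ℂ)) =
      !![((-((k + ϱ) / J) - Fw : ℝ) : ℂ), ((k / (J * r) - Fv : ℝ) : ℂ);
         ((k / (m * r) : ℝ) : ℂ), ((-((k + ζ * r ^ 2) / (m * r ^ 2)) : ℝ) : ℂ)] := by
    rw [hA]
    ext i j
    fin_cases i <;> fin_cases j <;> simp
  have hcp : (A.map (fun x => (x : ℂ))).charpoly
      = X ^ 2 - C ((T : ℂ)) * X + C ((D : ℂ)) := by
    rw [Matrix.charpoly, Matrix.det_fin_two, hmap]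
    simp [charmatrix_apply_eq, charmatrix_apply_ne, hT, hD]
    push_cast
    ring
  have hiff : IsHurwitz A ↔ (T < 0 ∧ 0 < D) := by
    rw [← quad_roots_neg_iff T D]
    unfold IsHurwitz
    apply forall_congr'
    intro z
    rw [hcp]
    simp [Polynomial.IsRoot, Polynomial.eval_pow]
  rw [hiff]
  constructor
  · rintro ⟨h1, h2⟩
    constructor
    · rw [hT] at h1
      have : (k + ζ * r ^ 2) / (m * r ^ 2) = k / (m * r ^ 2) + ζ / m := by
        field_simp
      linarith [this ▸ h1]
    · have hc : D = k / (m * r) * (Fv - (-(ϱ / (r * J)) - (ζ * r ^ 2 + k) / (r * k) * Fw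
                - (k + ϱ) * ζ * r / (k * J))) := by
        rw [hD]; field_simp; ring
      rw [hc] at h2
      have hpos : 0 < k / (m * r) := by positivity
      nlinarith
  · rintro ⟨h1, h2⟩
    constructor
    · rw [hT]
      have : (k + ζ * r ^ 2) / (m * r ^ 2) = k / (m * r ^ 2) + ζ / m := by
        field_simp
      rw [this]; linarith
    · have hc : D = k / (m * r) * (Fv - (-(ϱ / (r * J)) - (ζ * r ^ 2 + k) / (r * k) * Fw
                - (k + ϱ) * ζ * r / (k * J))) := by
        rw [hD]; field_simp; ring
      rw [hc]
      have hpos : 0 < k / (m * r) := by positivity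
      nlinarith
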